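/- If w is a squarefree word over {A,B,C}, then P(w) is squarefree. -/

import Mathlib

/-! P is 13-uniform, and its blocks are rigid: P c occurs in P a ++ P b only at offset 0, and
distinct letters have distinct nonempty suffixes. A square xx in P(w) with |x| ≥ 25 contains a
whole block in its first half; the copy of that block at distance |x| must be aligned, so
13 ∣ |x|, and comparing the suffixes of corresponding blocks yields a square in w. Shorter
squares lie inside the image of a factor of w of length 5, which is a finite check. -/

inductive T where
  | A | B | C
deriving DecidableEq, Repr

open T

def P : T → List T
  | A => [A,B,C,B,A,C,B,C,A,B,C,B,A]
  | B => [B,C,A,C,B,A,C,A,B,C,A,C,B]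
  | C => [C,A,B,A,C,B,A,B,C,A,B,A,C]

def Pw (w : List T) : List T := w.flatMap P

def SqFree (w : List T) : Prop := ∀ x : List T, x ≠ [] → ¬ (x ++ x) <:+: w

def rot : T → T
  | A => B
  | B => C
  | C => A

def rotw (w : List T) : List T := w.map rot

def refT : T → T
  | A => A
  | B => C
  | C => B

def reflw (w : List T) : List T := w.map refT

def OccursAt (w v : List T) (i : ℕ) : Prop := (v.drop i).take w.length = w


instance : Fintype T := ⟨{A, B, C}, fun x => by cases x <;> decide⟩

section Squares

variable {β : Type*}

def HasSquareAt (l : List β) (i n : ℕ) : Prop :=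
  0 < n ∧ i + 2 * n ≤ l.length ∧ (l.drop i).take n = (l.drop (i + n)).take n

instance [DecidableEq β] (l : List β) (i n : ℕ) : Decidable (HasSquareAt l i n) := by
  unfold HasSquareAt; infer_instance

lemma take_drop_take_drop (l : List β) {p n i m : ℕ} (h : i + m ≤ n) :
    (((l.drop p).take n).drop i).take m = (l.drop (p + i)).take m := by
  rw [List.drop_take, List.drop_drop, List.take_take, Nat.min_eq_left (by omega)]

lemma HasSquareAt.take_drop_eq {l : List β} {p n : ℕ} (h : HasSquareAt l p n) {i m : ℕ}
    (him : i + m ≤ n) : (l.drop (p + i)).take m = (l.drop (p + n + i)).take m := by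
  rw [← take_drop_take_drop l him, h.2.2, take_drop_take_drop l him]

lemma HasSquareAt.take_drop {l : List β} {p n : ℕ} (h : HasSquareAt l p n) {i m : ℕ}
    (hi : i ≤ p) (hm : p + 2 * n ≤ i + m) : HasSquareAt ((l.drop i).take m) (p - i) n := by
  have hlen := h.2.1
  refine ⟨h.1, by simp only [List.length_take, List.length_drop]; omega, ?_⟩
  rw [take_drop_take_drop l (by omega), take_drop_take_drop l (by omega),
    show i + (p - i) = p + 0 by omega, show i + (p - i + n) = p + n + 0 by omega]
  exact h.take_drop_eq (by omega)

end Squares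

section UniformMorphism

variable {α β : Type*} {f : α → List β} {k : ℕ}

lemma length_flatMap_of_uniform (hf : ∀ a, (f a).length = k) (w : List α) :
    (w.flatMap f).length = k * w.length := by
  induction w with
  | nil => rfl
  | cons a w ih => rw [List.flatMap_cons, List.length_append, hf, ih, List.length_cons]; ring

lemma drop_flatMap_of_uniform (hf : ∀ a, (f a).length = k) (w : List α) (i : ℕ) :
    (w.flatMap f).drop (k * i) = (w.drop i).flatMap f := by
  induction w generalizing i with
  | nil => simp
  | cons a w ih =>
    cases i with
    | zero => simp
    | succ i =>
      rw [List.flatMap_cons, List.drop_append, List.drop_of_length_le (by rw [hf]; nlinarith),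
        hf, show k * (i + 1) - k = k * i by rw [Nat.mul_succ, Nat.add_sub_cancel], ih]
      rfl

lemma take_flatMap_of_uniform (hf : ∀ a, (f a).length = k) (w : List α) (i : ℕ) :
    (w.flatMap f).take (k * i) = (w.take i).flatMap f := by
  induction w generalizing i with
  | nil => simp
  | cons a w ih =>
    cases i with
    | zero => simp
    | succ i =>
      rw [List.flatMap_cons, List.take_append, List.take_of_length_le (by rw [hf]; nlinarith),
        hf, show k * (i + 1) - k = k * i by rw [Nat.mul_succ, Nat.add_sub_cancel], ih]
      rfl

lemma take_drop_flatMap_of_uniform (hf : ∀ a, (f a).length = k) (w : List α) (i m : ℕ) :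
    ((w.flatMap f).drop (k * i)).take (k * m) = ((w.drop i).take m).flatMap f := by
  rw [drop_flatMap_of_uniform hf, take_flatMap_of_uniform hf]

lemma block_flatMap_of_uniform (hf : ∀ a, (f a).length = k) {w : List α} {i : ℕ}
    (hi : i < w.length) : ((w.flatMap f).drop (k * i)).take k = f w[i] := by
  have h := take_drop_flatMap_of_uniform hf w i 1
  rwa [mul_one, List.drop_eq_getElem_cons hi, List.take_succ_cons, List.take_zero,
    List.flatMap_singleton] at h

lemma drop_block_flatMap_of_uniform (hf : ∀ a, (f a).length = k) {w : List α} {i : ℕ}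
    (hi : i < w.length) (r : ℕ) :
    (f w[i]).drop r = ((w.flatMap f).drop (k * i + r)).take (k - r) := by
  rw [← block_flatMap_of_uniform hf hi, List.drop_take, List.drop_drop]

lemma dvd_of_take_drop_flatMap_eq (hf : ∀ a, (f a).length = k)
    (hsync : ∀ a b c, ∀ r < k, 0 < r → ((f a ++ f b).drop r).take k ≠ f c)
    {w : List α} {q : ℕ} {c : α} (hq : q + k ≤ k * w.length)
    (h : ((w.flatMap f).drop q).take k = f c) : k ∣ q := by
  by_contra hkq
  have hk : 0 < k := Nat.pos_of_ne_zero fun hk => hkq (by subst hk; simp_all)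
  obtain ⟨i, r, hr0, hrk, rfl⟩ : ∃ i r, 0 < r ∧ r < k ∧ q = k * i + r :=
    ⟨q / k, q % k, Nat.pos_of_ne_zero (mt Nat.dvd_of_mod_eq_zero hkq), Nat.mod_lt q hk,
      (Nat.div_add_mod q k).symm⟩
  have hi : i + 1 < w.length := Nat.lt_of_mul_lt_mul_left (a := k) (by rw [Nat.mul_succ]; omega)
  have hpair : ((w.flatMap f).drop (k * i)).take (k * 2) = f w[i] ++ f w[i + 1] := by
    rw [take_drop_flatMap_of_uniform hf, List.drop_eq_getElem_cons (i := i) (by omega),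
      List.drop_eq_getElem_cons hi]
    simp only [List.take_succ_cons, List.take_zero, List.flatMap_cons, List.flatMap_nil,
      List.append_nil]
  apply hsync w[i] w[i + 1] c r hrk hr0
  rw [← hpair, take_drop_take_drop _ (by omega), h]

theorem HasSquareAt.of_flatMap (hf : ∀ a, (f a).length = k)
    (hsync : ∀ a b c, ∀ r < k, 0 < r → ((f a ++ f b).drop r).take k ≠ f c)
    (hsuff : ∀ a b, ∀ r < k, (f a).drop r = (f b).drop r → a = b)
    {w : List α} {p n : ℕ} (hsq : HasSquareAt (w.flatMap f) p n) (hn : 2 * k ≤ n + 1) :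
    HasSquareAt w (p / k) (n / k) := by
  have hlen := hsq.2.1
  rw [length_flatMap_of_uniform hf] at hlen
  have hk : 0 < k := Nat.pos_of_ne_zero fun hk => by subst hk; have := hsq.1; omega
  obtain ⟨m, hpm, hmn⟩ : ∃ m, p ≤ k * m ∧ k * m + k ≤ p + n :=
    ⟨(p + k - 1) / k,
      by have := Nat.div_add_mod (p + k - 1) k; have := Nat.mod_lt (p + k - 1) hk; omega,
      by have := Nat.div_mul_le_self (p + k - 1) k; rw [mul_comm]; omega⟩
  have hmw : m < w.length := Nat.lt_of_mul_lt_mul_left (a := k) (by omega)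
  have hshift := hsq.take_drop_eq (i := k * m - p) (m := k) (by omega)
  rw [show p + (k * m - p) = k * m by omega, show p + n + (k * m - p) = k * m + n by omega,
    block_flatMap_of_uniform hf hmw] at hshift
  obtain ⟨K, rfl⟩ : k ∣ n := (Nat.dvd_add_right (dvd_mul_right k m)).mp
    (dvd_of_take_drop_flatMap_eq hf hsync (by omega) hshift.symm)
  rw [Nat.mul_div_cancel_left K hk]
  obtain ⟨i, r, hrk, rfl⟩ : ∃ i r, r < k ∧ p = k * i + r :=
    ⟨p / k, p % k, Nat.mod_lt p hk, (Nat.div_add_mod p k).symm⟩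
  rw [Nat.mul_add_div hk, Nat.div_eq_of_lt hrk, add_zero]
  have hiK : i + 2 * K ≤ w.length := Nat.le_of_mul_le_mul_left (by linarith) hk
  refine ⟨Nat.pos_of_ne_zero (by rintro rfl; have := hsq.1; omega), hiK, ?_⟩
  apply List.ext_getElem (by simp only [List.length_take, List.length_drop]; omega)
  intro j hj _
  simp only [List.getElem_take, List.getElem_drop]
  have hjK : j < K := by simp only [List.length_take, List.length_drop] at hj; omega
  apply hsuff _ _ r hrk
  rw [drop_block_flatMap_of_uniform hf, drop_block_flatMap_of_uniform hf]
  have := hsq.take_drop_eq (i := k * j) (m := k - r)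
    (by have := Nat.mul_le_mul_left k (show j + 1 ≤ K by omega); rw [Nat.mul_succ] at this; omega)
  convert this using 3 <;> ring

end UniformMorphism

lemma sqFree_iff_forall_not_hasSquareAt {w : List T} :
    SqFree w ↔ ∀ i n, ¬ HasSquareAt w i n := by
  constructor
  · rintro hw i n ⟨hn, hlen, heq⟩
    have hx : ((w.drop i).take n).length = n := by
      simp only [List.length_take, List.length_drop]; omega
    refine hw ((w.drop i).take n) (by rw [← List.length_pos_iff, hx]; exact hn)
      ⟨w.take i, w.drop (i + 2 * n), ?_⟩
    conv_rhs => rw [← List.take_append_drop i w, ← List.take_append_drop (2 * n) (w.drop i)]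
    rw [two_mul, List.take_add, List.drop_drop, ← heq, List.drop_drop, List.append_assoc]
  · rintro hw x hx ⟨s, t, rfl⟩
    apply hw s.length x.length
    refine ⟨List.length_pos_iff.mpr hx, by simp only [List.length_append]; omega, ?_⟩
    simp [List.drop_append, List.take_append]

lemma SqFree.of_infix {v w : List T} (hw : SqFree w) (hvw : v <:+: w) : SqFree v :=
  fun x hx hxv => hw x hx (hxv.trans hvw)

lemma length_P (a : T) : (P a).length = 13 := by cases a <;> rfl

lemma P_sync : ∀ a b c : T, ∀ r < 13, 0 < r → ((P a ++ P b).drop r).take 13 ≠ P c := by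
  decide

lemma P_drop_injective : ∀ a b : T, ∀ r < 13, (P a).drop r = (P b).drop r → a = b := by
  decide

def words : ℕ → List (List T)
  | 0 => [[]]
  | n + 1 => [] :: (words n).flatMap fun v => [A :: v, B :: v, C :: v]

lemma mem_words {v : List T} {n : ℕ} (hv : v.length ≤ n) : v ∈ words n := by
  induction n generalizing v with
  | zero => simp_all [words]
  | succ n ih =>
    rcases v with _ | ⟨a, v⟩
    · simp [words]
    · simp only [words, List.mem_cons, List.mem_flatMap]
      exact Or.inr ⟨v, ih (by simpa using hv), by cases a <;> simp⟩

lemma not_hasSquareAt_Pw_of_mem_words_five :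
    ∀ v ∈ words 5, (∀ i < 5, ∀ n < 3, ¬ HasSquareAt v i n) →
      ∀ r < 13, ∀ n < 25, ¬ HasSquareAt (Pw v) r n := by
  decide +kernel

lemma not_hasSquareAt_Pw_of_le {w : List T} (hw : SqFree w) {p n : ℕ} (hn : n ≤ 24) :
    ¬ HasSquareAt (Pw w) p n := by
  intro hsq
  -- the square starts in block p / 13 at offset < 13 and has length ≤ 48 < 65 - 12
  set v := (w.drop (p / 13)).take 5
  have hv : SqFree v :=
    hw.of_infix ((List.take_prefix _ _).isInfix.trans (List.drop_suffix _ _).isInfix)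
  have hPv : Pw v = ((Pw w).drop (13 * (p / 13))).take (13 * 5) :=
    (take_drop_flatMap_of_uniform length_P w _ 5).symm
  refine not_hasSquareAt_Pw_of_mem_words_five v (mem_words (by simp [v]))
    (fun i _ n _ => sqFree_iff_forall_not_hasSquareAt.mp hv i n)
    (p - 13 * (p / 13)) (by omega) n (by omega) ?_
  rw [hPv]
  exact hsq.take_drop (by omega) (by omega)

theorem stmt4 (w : List T) (h : SqFree w) : SqFree (Pw w) := by
  refine sqFree_iff_forall_not_hasSquareAt.mpr fun p n hsq => ?_
  rcases le_or_gt n 24 with hn | hn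
  · exact not_hasSquareAt_Pw_of_le h hn hsq
  · exact sqFree_iff_forall_not_hasSquareAt.mp h _ _
      (hsq.of_flatMap length_P P_sync P_drop_injective (by omega))
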